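/- Let Y, X*, W be random variables and Δ a binary indicator on a finite probability space satisfying: (a) P(Δ=1|Y,X*,W)=P(Δ=1|Y,X*) with φ(y,x):=P(Δ=1|Y=y,X*=x)>0, and (b) partial completeness: for every strictly positive function φ', E[φ(Y,X*)/φ'(Y,X*) − 1 | Y,W]=0 implies the ratio φ/φ' is a function of X* alone. If φ' is any strictly positive function with E[Δ/φ'(Y,X*) | Y, W]=1 almost surely, then for all (y,x) in the support and all x with P(X*=x,Δ=1)>0, ( E[ φ'(y,x)/φ'(Y,x) | Δ=1, X*=x ] )^{-1} = ω(y,x), where ω(y,x) := P(Δ=1|X*=x)/φ(y,x). -/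

import Mathlib

open scoped BigOperators
attribute [local instance] Classical.propDecidable

/-- Probability of an event under weight function `p` on a finite space. -/
noncomputable def Pr {Ω : Type*} [Fintype Ω] (p : Ω → ℝ) (A : Set Ω) : ℝ :=
  ∑ ω, if ω ∈ A then p ω else 0

/-- Conditional probability of `A` given `B`. -/
noncomputable def condPr {Ω : Type*} [Fintype Ω] (p : Ω → ℝ) (A B : Set Ω) : ℝ :=
  Pr p (A ∩ B) / Pr p B

/-- Conditional expectation of `f` given event `B`. -/
noncomputable def condE {Ω : Type*} [Fintype Ω] (p : Ω → ℝ) (f : Ω → ℝ) (B : Set Ω) : ℝ :=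
  (∑ ω, if ω ∈ B then p ω * f ω else 0) / Pr p B

/-- Expectation of `f`. -/
noncomputable def Ex {Ω : Type*} [Fintype Ω] (p : Ω → ℝ) (f : Ω → ℝ) : ℝ :=
  ∑ ω, p ω * f ω

section helpers
variable {Ω : Type*} [Fintype Ω] {p : Ω → ℝ}

lemma Pr_nonneg (hp : ∀ ω, 0 ≤ p ω) (A : Set Ω) : 0 ≤ Pr p A :=
  Finset.sum_nonneg fun ω _ => by by_cases h : ω ∈ A <;> simp [h, hp ω]

lemma Pr_mono (hp : ∀ ω, 0 ≤ p ω) {A B : Set Ω} (hAB : A ⊆ B) : Pr p A ≤ Pr p B :=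
  Finset.sum_le_sum fun ω _ => by
    by_cases hA : ω ∈ A
    · simp [hA, hAB hA]
    · by_cases hB : ω ∈ B <;> simp [hA, hB, hp ω]

lemma le_Pr (hp : ∀ ω, 0 ≤ p ω) {A : Set Ω} {ω : Ω} (h : ω ∈ A) : p ω ≤ Pr p A := by
  have := Finset.single_le_sum (f := fun ω' => if ω' ∈ A then p ω' else 0)
    (fun i _ => by by_cases hi : i ∈ A <;> simp [hi, hp i]) (Finset.mem_univ ω)
  simpa [h, Pr] using this

lemma exists_pos_of_Pr_pos (hp : ∀ ω, 0 ≤ p ω) {A : Set Ω} (h : 0 < Pr p A) :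
    ∃ ω, ω ∈ A ∧ 0 < p ω := by
  by_contra hc
  push_neg at hc
  have hz : Pr p A = 0 := Finset.sum_eq_zero fun ω _ => by
    by_cases hω : ω ∈ A
    · have := le_antisymm (hc ω hω) (hp ω); simp [hω, this]
    · simp [hω]
  rw [hz] at h; exact lt_irrefl 0 h

lemma sum_group {γ' : Type*} (k : Ω → γ') (F : Ω → ℝ) :
    ∑ ω, F ω = ∑ c ∈ Finset.univ.image k,
      ∑ ω ∈ Finset.univ.filter (fun ω => k ω = c), F ω :=
  (Finset.sum_fiberwise_of_maps_to
    (fun ω _ => Finset.mem_image_of_mem k (Finset.mem_univ ω)) F).symm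

end helpers

/-- identification theorem: under the exclusion restriction and
partial completeness (in ratio form), every strictly positive `φ'` satisfying
the conditional moment restriction `E[Δ/φ'(Y,X*) | Y,W] = 1` a.s. yields the
true fractional probability weight
`ω(y,x) = P(Δ=1|X*=x)/φ(y,x)` via `(E[φ'(y,x)/φ'(Y,x) | Δ=1, X*=x])⁻¹`. -/
theorem stmt17 {Ω α β γ : Type*} [Fintype Ω]
    (p : Ω → ℝ) (hp : ∀ ω, 0 ≤ p ω) (hsum : ∑ ω, p ω = 1)
    (Y : Ω → α) (X : Ω → β) (W : Ω → γ) (D : Ω → Bool)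
    (φ : α → β → ℝ)
    (hφdef : ∀ y x, φ y x =
      condPr p {ω' | D ω' = true} {ω' | Y ω' = y ∧ X ω' = x})
    (hφpos : ∀ y x, 0 < φ y x)
    (hexcl : ∀ ω, 0 < p ω →
      condPr p {ω' | D ω' = true} {ω' | Y ω' = Y ω ∧ X ω' = X ω ∧ W ω' = W ω}
        = condPr p {ω' | D ω' = true} {ω' | Y ω' = Y ω ∧ X ω' = X ω})
    (hpc : ∀ φ'' : α → β → ℝ, (∀ y x, 0 < φ'' y x) →
      (∀ ω, 0 < p ω →
        condE p (fun ω' => φ (Y ω') (X ω') / φ'' (Y ω') (X ω') - 1)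
          {ω' | Y ω' = Y ω ∧ W ω' = W ω} = 0) →
      ∃ ψ : β → ℝ, ∀ ω, 0 < p ω →
        φ (Y ω) (X ω) / φ'' (Y ω) (X ω) = ψ (X ω))
    (φ' : α → β → ℝ) (hφ'pos : ∀ y x, 0 < φ' y x)
    (hmoment : ∀ ω, 0 < p ω →
      condE p (fun ω' => (if D ω' then (1:ℝ) else 0) / φ' (Y ω') (X ω'))
        {ω' | Y ω' = Y ω ∧ W ω' = W ω} = 1) :
    ∀ ω₀, 0 < p ω₀ → ∀ x, 0 < Pr p {ω' | X ω' = x ∧ D ω' = true} →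
      (condE p (fun ω' => φ' (Y ω₀) x / φ' (Y ω') x)
          {ω' | D ω' = true ∧ X ω' = x})⁻¹
        = condPr p {ω' | D ω' = true} {ω' | X ω' = x} / φ (Y ω₀) x := by
  -- Step A: every pair (y,x) is realized in the support with D = true
  have hJpos : ∀ y x, 0 < Pr p ({ω' | D ω' = true} ∩ {ω' | Y ω' = y ∧ X ω' = x}) := by
    intro y x
    have h := hφpos y x
    rw [hφdef y x] at h
    unfold condPr at h
    have hnum : 0 ≤ Pr p ({ω' | D ω' = true} ∩ {ω' | Y ω' = y ∧ X ω' = x}) := Pr_nonneg hp _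
    have hden : 0 ≤ Pr p {ω' | Y ω' = y ∧ X ω' = x} := Pr_nonneg hp _
    rcases lt_or_eq_of_le hnum with h1 | h1
    · exact h1
    · rw [← h1, zero_div] at h; exact absurd h (lt_irrefl 0)
  have hsupp : ∀ y x, ∃ ω, 0 < p ω ∧ D ω = true ∧ Y ω = y ∧ X ω = x := by
    intro y x
    obtain ⟨ω, hω, hpω⟩ := exists_pos_of_Pr_pos hp (hJpos y x)
    obtain ⟨hd, hy, hx⟩ := hω
    exact ⟨ω, hpω, hd, hy, hx⟩
  -- L2': joint identity on pairs
  have hpairden : ∀ y x, 0 < Pr p {ω' | Y ω' = y ∧ X ω' = x} := by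
    intro y x
    exact lt_of_lt_of_le (hJpos y x) (Pr_mono hp (Set.inter_subset_right))
  have hL2' : ∀ y x, Pr p ({ω' | D ω' = true} ∩ {ω' | Y ω' = y ∧ X ω' = x})
      = φ y x * Pr p {ω' | Y ω' = y ∧ X ω' = x} := by
    intro y x
    have h := hφdef y x
    unfold condPr at h
    rw [eq_div_iff (hpairden y x).ne'] at h
    linarith [h]
  -- L2: triple identity
  have hL2 : ∀ y x w, Pr p ({ω' | D ω' = true} ∩ {ω' | Y ω' = y ∧ X ω' = x ∧ W ω' = w})
      = φ y x * Pr p {ω' | Y ω' = y ∧ X ω' = x ∧ W ω' = w} := by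
    intro y x w
    rcases eq_or_lt_of_le (Pr_nonneg hp {ω' | Y ω' = y ∧ X ω' = x ∧ W ω' = w}) with hF | hF
    · have h0 : Pr p ({ω' | D ω' = true} ∩ {ω' | Y ω' = y ∧ X ω' = x ∧ W ω' = w}) = 0 :=
        le_antisymm (le_trans (Pr_mono hp Set.inter_subset_right) hF.symm.le)
          (Pr_nonneg hp _)
      rw [h0, ← hF]; ring
    · obtain ⟨ω, hω, hpω⟩ := exists_pos_of_Pr_pos hp hF
      simp only [Set.mem_setOf_eq] at hω
      have he := hexcl ω hpω
      rw [hω.1, hω.2.1, hω.2.2] at he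
      rw [hφdef y x, ← he]
      unfold condPr
      field_simp
  -- Step D: the moment condition implies the partial-completeness premise
  have hprem : ∀ ω, 0 < p ω →
      condE p (fun ω' => φ (Y ω') (X ω') / φ' (Y ω') (X ω') - 1)
        {ω' | Y ω' = Y ω ∧ W ω' = W ω} = 0 := by
    intro ω hω
    have hmemE : ω ∈ {ω' | Y ω' = Y ω ∧ W ω' = W ω} := ⟨rfl, rfl⟩
    have hE : 0 < Pr p {ω' | Y ω' = Y ω ∧ W ω' = W ω} :=
      lt_of_lt_of_le hω (le_Pr hp hmemE)
    have key : (∑ ω', if ω' ∈ {ω' | Y ω' = Y ω ∧ W ω' = W ω} then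
          p ω' * ((if D ω' then (1:ℝ) else 0) / φ' (Y ω') (X ω')) else 0)
        = ∑ ω', if ω' ∈ {ω' | Y ω' = Y ω ∧ W ω' = W ω} then
          p ω' * (φ (Y ω') (X ω') / φ' (Y ω') (X ω')) else 0 := by
      rw [sum_group X (fun ω' => if ω' ∈ {ω' | Y ω' = Y ω ∧ W ω' = W ω} then
            p ω' * ((if D ω' then (1:ℝ) else 0) / φ' (Y ω') (X ω')) else 0),
          sum_group X (fun ω' => if ω' ∈ {ω' | Y ω' = Y ω ∧ W ω' = W ω} then
            p ω' * (φ (Y ω') (X ω') / φ' (Y ω') (X ω')) else 0)]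
      refine Finset.sum_congr rfl fun x' _ => ?_
      rw [Finset.sum_filter, Finset.sum_filter]
      have l1 : (∑ ω', if X ω' = x' then (if ω' ∈ {ω' | Y ω' = Y ω ∧ W ω' = W ω} then
            p ω' * ((if D ω' then (1:ℝ) else 0) / φ' (Y ω') (X ω')) else 0) else 0)
          = Pr p ({ω' | D ω' = true} ∩ {ω' | Y ω' = Y ω ∧ X ω' = x' ∧ W ω' = W ω})
            * (φ' (Y ω) x')⁻¹ := by
        unfold Pr
        rw [Finset.sum_mul]
        refine Finset.sum_congr rfl fun ω' _ => ?_
        by_cases hy : Y ω' = Y ω <;> by_cases hw : W ω' = W ω <;>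
          by_cases h1 : X ω' = x' <;> by_cases h3 : D ω' = true <;>
          simp [hy, hw, h1, h3, Set.mem_inter_iff, Set.mem_setOf_eq, div_eq_mul_inv]
      have l2 : (∑ ω', if X ω' = x' then (if ω' ∈ {ω' | Y ω' = Y ω ∧ W ω' = W ω} then
            p ω' * (φ (Y ω') (X ω') / φ' (Y ω') (X ω')) else 0) else 0)
          = Pr p {ω' | Y ω' = Y ω ∧ X ω' = x' ∧ W ω' = W ω}
            * (φ (Y ω) x' * (φ' (Y ω) x')⁻¹) := by
        unfold Pr
        rw [Finset.sum_mul]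
        refine Finset.sum_congr rfl fun ω' _ => ?_
        by_cases hy : Y ω' = Y ω <;> by_cases hw : W ω' = W ω <;>
          by_cases h1 : X ω' = x' <;>
          simp [hy, hw, h1, Set.mem_setOf_eq, div_eq_mul_inv, mul_assoc]
      rw [l1, l2, hL2 (Y ω) x' (W ω)]
      ring
    have hmom := hmoment ω hω
    simp only [condE] at hmom ⊢
    rw [div_eq_one_iff_eq hE.ne'] at hmom
    rw [key] at hmom
    have split : (∑ ω', if ω' ∈ {ω' | Y ω' = Y ω ∧ W ω' = W ω} then
          p ω' * (φ (Y ω') (X ω') / φ' (Y ω') (X ω') - 1) else 0)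
        = (∑ ω', if ω' ∈ {ω' | Y ω' = Y ω ∧ W ω' = W ω} then
          p ω' * (φ (Y ω') (X ω') / φ' (Y ω') (X ω')) else 0)
          - Pr p {ω' | Y ω' = Y ω ∧ W ω' = W ω} := by
      unfold Pr
      rw [← Finset.sum_sub_distrib]
      refine Finset.sum_congr rfl fun ω' _ => ?_
      by_cases h : ω' ∈ {ω' | Y ω' = Y ω ∧ W ω' = W ω} <;> simp [h, mul_sub]
    rw [split, hmom, sub_self, zero_div]
  obtain ⟨ψ, hψ⟩ := hpc φ' hφ'pos hprem
  have hψ' : ∀ y x, φ y x / φ' y x = ψ x := by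
    intro y x
    obtain ⟨ω, hω, hd, hy, hx⟩ := hsupp y x
    have h := hψ ω hω
    rw [hy, hx] at h
    exact h
  -- Step E: final computation
  intro ω₀ hω₀ x hx
  have hψx : 0 < ψ x := by
    rw [← hψ' (Y ω₀) x]
    exact div_pos (hφpos _ _) (hφ'pos _ _)
  have hcanc : ∀ y', φ' (Y ω₀) x / φ' y' x = φ (Y ω₀) x / φ y' x := by
    intro y'
    have e1 : φ (Y ω₀) x = ψ x * φ' (Y ω₀) x := by
      rw [← hψ' (Y ω₀) x]
      exact (div_mul_cancel₀ _ (hφ'pos _ _).ne').symm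
    have e2 : φ y' x = ψ x * φ' y' x := by
      rw [← hψ' y' x]
      exact (div_mul_cancel₀ _ (hφ'pos _ _).ne').symm
    rw [div_eq_div_iff (hφ'pos y' x).ne' (hφpos y' x).ne', e1, e2]
    ring
  have hnum : (∑ ω', if ω' ∈ {ω' | D ω' = true ∧ X ω' = x} then
        p ω' * (φ' (Y ω₀) x / φ' (Y ω') x) else 0)
      = φ (Y ω₀) x * ∑ ω', (if ω' ∈ {ω' | D ω' = true ∧ X ω' = x} then
        p ω' * (φ (Y ω') x)⁻¹ else 0) := by
    rw [Finset.mul_sum]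
    refine Finset.sum_congr rfl fun ω' _ => ?_
    by_cases h : ω' ∈ {ω' | D ω' = true ∧ X ω' = x}
    · simp only [h, if_pos]
      rw [hcanc (Y ω'), div_eq_mul_inv]
      ring
    · simp [h]
  have hM : (∑ ω', if ω' ∈ {ω' | D ω' = true ∧ X ω' = x} then
        p ω' * (φ (Y ω') x)⁻¹ else 0) = Pr p {ω' | X ω' = x} := by
    unfold Pr
    rw [sum_group Y (fun ω' => if ω' ∈ {ω' | D ω' = true ∧ X ω' = x} then
          p ω' * (φ (Y ω') x)⁻¹ else 0),
        sum_group Y (fun ω' => if ω' ∈ {ω' | X ω' = x} then p ω' else 0)]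
    refine Finset.sum_congr rfl fun y' _ => ?_
    rw [Finset.sum_filter, Finset.sum_filter]
    have l1 : (∑ ω', if Y ω' = y' then (if ω' ∈ {ω' | D ω' = true ∧ X ω' = x} then
          p ω' * (φ (Y ω') x)⁻¹ else 0) else 0)
        = Pr p ({ω' | D ω' = true} ∩ {ω' | Y ω' = y' ∧ X ω' = x}) * (φ y' x)⁻¹ := by
      unfold Pr
      rw [Finset.sum_mul]
      refine Finset.sum_congr rfl fun ω' _ => ?_
      by_cases hy : Y ω' = y' <;> by_cases h1 : X ω' = x <;> by_cases h3 : D ω' = true <;>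
        simp [hy, h1, h3, Set.mem_inter_iff, Set.mem_setOf_eq]
    have l2 : (∑ ω', if Y ω' = y' then (if ω' ∈ {ω' | X ω' = x} then p ω' else 0) else 0)
        = Pr p {ω' | Y ω' = y' ∧ X ω' = x} := by
      unfold Pr
      refine Finset.sum_congr rfl fun ω' _ => ?_
      by_cases hy : Y ω' = y' <;> by_cases h1 : X ω' = x <;>
        simp [hy, h1, Set.mem_setOf_eq]
    rw [l1, l2, hL2' y' x]
    rw [mul_comm (φ y' x), mul_assoc, mul_inv_cancel₀ (hφpos y' x).ne', mul_one]
  have hBeq : ({ω' | X ω' = x ∧ D ω' = true} : Set Ω) = {ω' | D ω' = true ∧ X ω' = x} := by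
    ext ω'; exact and_comm
  have hBeq2 : ({ω' | D ω' = true} : Set Ω) ∩ {ω' | X ω' = x} = {ω' | D ω' = true ∧ X ω' = x} := by
    ext ω'; simp [Set.mem_inter_iff, Set.mem_setOf_eq]
  have hPrB : 0 < Pr p {ω' | D ω' = true ∧ X ω' = x} := hBeq ▸ hx
  have hPrX : 0 < Pr p {ω' | X ω' = x} :=
    lt_of_lt_of_le hPrB (Pr_mono hp fun ω' h => h.2)
  simp only [condE, condPr]
  rw [hnum, hM, congrArg (Pr p) hBeq2]
  rw [mul_div_assoc, mul_inv]
  field_simp
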